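/- (Idempotence of the q-antisymmetrizers and q-symmetrizers.) For every integer k ≥ 1 the operators A^{(k)} and S^{(k)} on V^{⊗k} are projectors: (A^{(k)})² = A^{(k)} and (S^{(k)})² = S^{(k)}. -/

import Mathlib

open Finset

/-- Operators on `V^{⊗ m}` where `V = F^N`, represented as matrices indexed by
multi-indices `Fin m → Fin N`. -/
abbrev TensM (R : Type*) (N m : ℕ) := Matrix (Fin m → Fin N) (Fin m → Fin N) R

/-- Operators on `V ⊗ V`, i.e. `N² × N²` matrices. -/
abbrev RMat (R : Type*) (N : ℕ) := Matrix (Fin N × Fin N) (Fin N × Fin N) R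

/-- The `q`-number `k_q = (q^k - q^{-k})/(q - q^{-1})`. -/
noncomputable def qnum {F : Type*} [Field F] (q : F) (k : ℕ) : F :=
  (q ^ k - q⁻¹ ^ k) / (q - q⁻¹)

/-- Place an `N × N` matrix on the tensor leg number `i` (0-based) of `V^{⊗ m}`,
acting as the identity on all other legs. -/
def place1 {R : Type*} [Zero R] {N m : ℕ} (i : ℕ) (M : Matrix (Fin N) (Fin N) R) :
    TensM R N m :=
  Matrix.of fun a b =>
    if h : i < m then
      if ∀ t : Fin m, t.val ≠ i → a t = b t then M (a ⟨i, h⟩) (b ⟨i, h⟩) else 0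
    else 0

/-- Place an operator on `V ⊗ V` on the (0-based) tensor legs `i, i+1` of `V^{⊗ m}`,
acting as the identity on all other legs.  (So the paper's `R̂_i`, `1`-based, is
`place2 (i-1)`.) -/
def place2 {R : Type*} [Zero R] {N m : ℕ} (i : ℕ) (M : RMat R N) :
    TensM R N m :=
  Matrix.of fun a b =>
    if h : i + 1 < m then
      if ∀ t : Fin m, t.val ≠ i → t.val ≠ i + 1 → a t = b t then
        M (a ⟨i, by omega⟩, a ⟨i + 1, h⟩) (b ⟨i, by omega⟩, b ⟨i + 1, h⟩)
      else 0
    else 0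

/-- Embed an operator on `V^{⊗ k}` into `V^{⊗ m}` (`k ≤ m`), acting on the first `k`
tensor legs and as the identity on the remaining legs. -/
def embed {R : Type*} [Zero R] {N : ℕ} (m : ℕ) {k : ℕ} (M : TensM R N k) :
    TensM R N m :=
  Matrix.of fun a b =>
    if h : k ≤ m then
      if ∀ t : Fin m, k ≤ t.val → a t = b t then
        M (fun s => a ⟨s.val, lt_of_lt_of_le s.isLt h⟩)
          (fun s => b ⟨s.val, lt_of_lt_of_le s.isLt h⟩)
      else 0
    else 0

/-- The braid form of the Yang--Baxter equation `R̂₁ R̂₂ R̂₁ = R̂₂ R̂₁ R̂₂` on `V^{⊗3}`. -/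
def YangBaxter {F : Type*} [Field F] {N : ℕ} (Rh : RMat F N) : Prop :=
  (place2 0 Rh : TensM F N 3) * place2 1 Rh * place2 0 Rh =
    place2 1 Rh * place2 0 Rh * place2 1 Rh

/-- The Hecke condition `R̂² = I + (q - q⁻¹) R̂`. -/
def Hecke {F : Type*} [Field F] {N : ℕ} (q : F) (Rh : RMat F N) : Prop :=
  Rh * Rh = 1 + (q - q⁻¹) • Rh

/-- The `q`-antisymmetrizers `A^{(k)}`, defined inductively by `A^{(1)} = I` and
`A^{(k)} = (1/k_q) A^{(k-1)} (q^{k-1} - (k-1)_q R̂_{k-1}) A^{(k-1)}`. -/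
noncomputable def antis {F : Type*} [Field F] {N : ℕ} (Rh : RMat F N) (q : F) :
    (k : ℕ) → TensM F N k
  | 0 => 1
  | 1 => 1
  | k + 2 =>
      (qnum q (k + 2))⁻¹ •
        (embed (k + 2) (antis Rh q (k + 1)) *
          (q ^ (k + 1) • (1 : TensM F N (k + 2)) - qnum q (k + 1) • place2 k Rh) *
          embed (k + 2) (antis Rh q (k + 1)))

/-- The `q`-symmetrizers `S^{(k)}`, defined inductively by `S^{(1)} = I` and
`S^{(k)} = (1/k_q) S^{(k-1)} (q^{1-k} + (k-1)_q R̂_{k-1}) S^{(k-1)}`. -/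
noncomputable def syms {F : Type*} [Field F] {N : ℕ} (Rh : RMat F N) (q : F) :
    (k : ℕ) → TensM F N k
  | 0 => 1
  | 1 => 1
  | k + 2 =>
      (qnum q (k + 2))⁻¹ •
        (embed (k + 2) (syms Rh q (k + 1)) *
          (q⁻¹ ^ (k + 1) • (1 : TensM F N (k + 2)) + qnum q (k + 1) • place2 k Rh) *
          embed (k + 2) (syms Rh q (k + 1)))

/-- Partial trace over all tensor legs except the last one. -/
def trAllButLast {R : Type*} [AddCommMonoid R] {N : ℕ} :
    {m : ℕ} → TensM R N m → Matrix (Fin N) (Fin N) R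
  | 0, _ => 0
  | m + 1, M => Matrix.of fun x y => ∑ a : Fin m → Fin N, M (Fin.snoc a x) (Fin.snoc a y)

/-- Partial trace over all tensor legs except the first one. -/
def trAllButFirst {R : Type*} [AddCommMonoid R] {N : ℕ} :
    {m : ℕ} → TensM R N m → Matrix (Fin N) (Fin N) R
  | 0, _ => 0
  | m + 1, M => Matrix.of fun x y => ∑ a : Fin m → Fin N, M (Fin.cons x a) (Fin.cons y a)

/-- Extension of scalars `F → 𝒜` applied entrywise (scalar entries are central in `𝒜`). -/
def lift {F : Type*} [Field F] (𝒜 : Type*) [Ring 𝒜] [Algebra F 𝒜] {N m : ℕ}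
    (M : TensM F N m) : TensM 𝒜 N m := M.map (algebraMap F 𝒜)

/-- The product `R̂_{i+1} R̂_{i+2} ⋯ R̂_{i+l}` (1-based paper numbering), i.e. the product of
copies of `R̂` placed at 0-based positions `i, i+1, …, i+l-1` of `V^{⊗ m}`. -/
noncomputable def rChainFrom {F : Type*} [Field F] {N : ℕ} (m : ℕ) (Rh : RMat F N)
    (i : ℕ) : ℕ → TensM F N m
  | 0 => 1
  | l + 1 => rChainFrom m Rh i l * place2 (i + l) Rh

/-- The product `R̂₁ R̂₂ ⋯ R̂_l` (1-based paper numbering) on `V^{⊗ m}`. -/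
noncomputable def rChain {F : Type*} [Field F] {N : ℕ} (m : ℕ) (Rh : RMat F N)
    (l : ℕ) : TensM F N m := rChainFrom m Rh 0 l

/-- The product `T₁ T₂ ⋯ T_k` of copies of the quantum matrix `T` on `V^{⊗ m}`. -/
def Tprod {𝒜 : Type*} [Ring 𝒜] {N : ℕ} (m : ℕ) (T : Matrix (Fin N) (Fin N) 𝒜) :
    ℕ → TensM 𝒜 N m
  | 0 => 1
  | k + 1 => Tprod m T k * place1 k T

/-- The matrix `T₁T₂` on `V ⊗ V`, `(T₁T₂)^{ij}_{kl} = T^i_k T^j_l`. -/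
def TT {𝒜 : Type*} [Mul 𝒜] {N : ℕ} (T : Matrix (Fin N) (Fin N) 𝒜) : RMat 𝒜 N :=
  Matrix.of fun p r => T p.1 r.1 * T p.2 r.2

/-- The RTT relation `R̂ T₁T₂ = T₁T₂ R̂` (entries of `R̂` are central scalars). -/
def RTTrel {F : Type*} [Field F] {N : ℕ} (𝒜 : Type*) [Ring 𝒜] [Algebra F 𝒜]
    (Rh : RMat F N) (T : Matrix (Fin N) (Fin N) 𝒜) : Prop :=
  Rh.map (algebraMap F 𝒜) * TT T = TT T * Rh.map (algebraMap F 𝒜)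

/-- The `k`-th underlined power `T^{⟨k⟩} = Tr_{(1…k-1)} (R̂₁ ⋯ R̂_{k-1} T₁ ⋯ T_k)`. -/
noncomputable def underPow {F : Type*} [Field F] (𝒜 : Type*) [Ring 𝒜] [Algebra F 𝒜]
    {N : ℕ} (Rh : RMat F N) (T : Matrix (Fin N) (Fin N) 𝒜) :
    ℕ → Matrix (Fin N) (Fin N) 𝒜
  | 0 => 1
  | k + 1 => trAllButLast (lift 𝒜 (rChain (k + 1) Rh k) * Tprod (k + 1) T (k + 1))

/-- The `k`-th overlined power `T^{[k]} = Tr_{(2…k)} (R̂₁ ⋯ R̂_{k-1} T₁ ⋯ T_k)`. -/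
noncomputable def overPow {F : Type*} [Field F] (𝒜 : Type*) [Ring 𝒜] [Algebra F 𝒜]
    {N : ℕ} (Rh : RMat F N) (T : Matrix (Fin N) (Fin N) 𝒜) :
    ℕ → Matrix (Fin N) (Fin N) 𝒜
  | 0 => 1
  | k + 1 => trAllButFirst (lift 𝒜 (rChain (k + 1) Rh k) * Tprod (k + 1) T (k + 1))

/-- The `k`-th right wedge power `T^{∧k,r} = Tr_{(1…k-1)} (A^{(k)} T₁ ⋯ T_k)`. -/
noncomputable def wedgeR {F : Type*} [Field F] (𝒜 : Type*) [Ring 𝒜] [Algebra F 𝒜]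
    {N : ℕ} (Rh : RMat F N) (q : F) (T : Matrix (Fin N) (Fin N) 𝒜) :
    ℕ → Matrix (Fin N) (Fin N) 𝒜
  | 0 => 1
  | k + 1 => trAllButLast (lift 𝒜 (antis Rh q (k + 1)) * Tprod (k + 1) T (k + 1))

/-- The `k`-th left wedge power `T^{∧k,l} = Tr_{(2…k)} (A^{(k)} T₁ ⋯ T_k)`. -/
noncomputable def wedgeL {F : Type*} [Field F] (𝒜 : Type*) [Ring 𝒜] [Algebra F 𝒜]
    {N : ℕ} (Rh : RMat F N) (q : F) (T : Matrix (Fin N) (Fin N) 𝒜) :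
    ℕ → Matrix (Fin N) (Fin N) 𝒜
  | 0 => 1
  | k + 1 => trAllButFirst (lift 𝒜 (antis Rh q (k + 1)) * Tprod (k + 1) T (k + 1))

/-- The `k`-th right symmetric power `T^{Sk,r} = Tr_{(1…k-1)} (S^{(k)} T₁ ⋯ T_k)`. -/
noncomputable def sPowR {F : Type*} [Field F] (𝒜 : Type*) [Ring 𝒜] [Algebra F 𝒜]
    {N : ℕ} (Rh : RMat F N) (q : F) (T : Matrix (Fin N) (Fin N) 𝒜) :
    ℕ → Matrix (Fin N) (Fin N) 𝒜
  | 0 => 1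
  | k + 1 => trAllButLast (lift 𝒜 (syms Rh q (k + 1)) * Tprod (k + 1) T (k + 1))

/-- The `k`-th left symmetric power `T^{Sk,l} = Tr_{(2…k)} (S^{(k)} T₁ ⋯ T_k)`. -/
noncomputable def sPowL {F : Type*} [Field F] (𝒜 : Type*) [Ring 𝒜] [Algebra F 𝒜]
    {N : ℕ} (Rh : RMat F N) (q : F) (T : Matrix (Fin N) (Fin N) 𝒜) :
    ℕ → Matrix (Fin N) (Fin N) 𝒜
  | 0 => 1
  | k + 1 => trAllButFirst (lift 𝒜 (syms Rh q (k + 1)) * Tprod (k + 1) T (k + 1))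

/-- The elementary symmetric functions `σ_k(T) = q^k Tr_{(1…k)} (A^{(k)} T₁ ⋯ T_k)`
(with `σ₀(T) = 1`). -/
noncomputable def sigmaT {F : Type*} [Field F] (𝒜 : Type*) [Ring 𝒜] [Algebra F 𝒜]
    {N : ℕ} (Rh : RMat F N) (q : F) (T : Matrix (Fin N) (Fin N) 𝒜) (k : ℕ) : 𝒜 :=
  q ^ k • Matrix.trace (lift 𝒜 (antis Rh q k) * Tprod k T k)

/-- The complete symmetric functions `τ_k(T) = q^{-k} Tr_{(1…k)} (S^{(k)} T₁ ⋯ T_k)`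
(with `τ₀(T) = 1`). -/
noncomputable def tauT {F : Type*} [Field F] (𝒜 : Type*) [Ring 𝒜] [Algebra F 𝒜]
    {N : ℕ} (Rh : RMat F N) (q : F) (T : Matrix (Fin N) (Fin N) 𝒜) (k : ℕ) : 𝒜 :=
  q⁻¹ ^ k • Matrix.trace (lift 𝒜 (syms Rh q k) * Tprod k T k)

/-- The `q`-power sums `s_k(T) = Tr_{(1…k)} (R̂₁ ⋯ R̂_{k-1} T₁ ⋯ T_k)` (with `s₀(T) = 1`). -/
noncomputable def psum {F : Type*} [Field F] (𝒜 : Type*) [Ring 𝒜] [Algebra F 𝒜]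
    {N : ℕ} (Rh : RMat F N) (T : Matrix (Fin N) (Fin N) 𝒜) (k : ℕ) : 𝒜 :=
  Matrix.trace (lift 𝒜 (rChain k Rh (k - 1)) * Tprod k T k)

/-- `D_ℓ = (n_q / q^n) Tr_{(1…n-1)} A^{(n)}`. -/
noncomputable def Dleft {F : Type*} [Field F] {N : ℕ} (Rh : RMat F N) (q : F) (n : ℕ) :
    Matrix (Fin N) (Fin N) F :=
  (qnum q n / q ^ n) • trAllButLast (antis Rh q n)

/-- `D_r = (n_q / q^n) Tr_{(2…n)} A^{(n)}`. -/
noncomputable def Dright {F : Type*} [Field F] {N : ℕ} (Rh : RMat F N) (q : F) (n : ℕ) :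
    Matrix (Fin N) (Fin N) F :=
  (qnum q n / q ^ n) • trAllButFirst (antis Rh q n)

/-- The Reflection equation `R̂ L₁ R̂ L₁ = L₁ R̂ L₁ R̂` on `V ⊗ V`. -/
def RErel {F : Type*} [Field F] {N : ℕ} (𝒜 : Type*) [Ring 𝒜] [Algebra F 𝒜]
    (Rh : RMat F N) (L : Matrix (Fin N) (Fin N) 𝒜) : Prop :=
  lift 𝒜 (place2 0 Rh : TensM F N 2) * place1 0 L * lift 𝒜 (place2 0 Rh) * place1 0 L =
    place1 0 L * lift 𝒜 (place2 0 Rh) * place1 0 L * lift 𝒜 (place2 0 Rh)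

/-- `L_{k̄}` (0-based: `Lbar … 0 = L₁`, `Lbar … k = R̂_k (Lbar … (k-1)) R̂_k⁻¹`). -/
noncomputable def Lbar {F : Type*} [Field F] (𝒜 : Type*) [Ring 𝒜] [Algebra F 𝒜]
    {N : ℕ} (Rh : RMat F N) (m : ℕ) (L : Matrix (Fin N) (Fin N) 𝒜) :
    ℕ → TensM 𝒜 N m
  | 0 => place1 0 L
  | k + 1 => lift 𝒜 (place2 k Rh) * Lbar 𝒜 Rh m L k * lift 𝒜 (place2 k Rh⁻¹)

/-- The product `L_{1̄} L_{2̄} ⋯ L_{k̄}` on `V^{⊗ m}`. -/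
noncomputable def LbarProd {F : Type*} [Field F] (𝒜 : Type*) [Ring 𝒜] [Algebra F 𝒜]
    {N : ℕ} (Rh : RMat F N) (m : ℕ) (L : Matrix (Fin N) (Fin N) 𝒜) :
    ℕ → TensM 𝒜 N m
  | 0 => 1
  | k + 1 => LbarProd 𝒜 Rh m L k * Lbar 𝒜 Rh m L k

/-- Insertion of a copy of `D` on every tensor leg of `V^{⊗(m+1)}` except the first one. -/
def Dbig {F : Type*} [Field F] {N : ℕ} (D : Matrix (Fin N) (Fin N) F) (m : ℕ) :
    TensM F N (m + 1) :=
  Matrix.of fun a b =>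
    (if a 0 = b 0 then (1 : F) else 0) * ∏ t : Fin m, D (a t.succ) (b t.succ)

/-- `L^{∧k} = Tr_{q (2…k)} (A^{(k)} L_{1̄} ⋯ L_{k̄})`, the `q`-trace over the legs `2…k`,
with a copy of `D` inserted in each traced leg. -/
noncomputable def LwedgeRE {F : Type*} [Field F] (𝒜 : Type*) [Ring 𝒜] [Algebra F 𝒜]
    {N : ℕ} (Rh : RMat F N) (q : F) (D : Matrix (Fin N) (Fin N) F)
    (L : Matrix (Fin N) (Fin N) 𝒜) : ℕ → Matrix (Fin N) (Fin N) 𝒜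
  | 0 => 1
  | k + 1 => trAllButFirst
      (lift 𝒜 (antis Rh q (k + 1)) * LbarProd 𝒜 Rh (k + 1) L (k + 1) * lift 𝒜 (Dbig D k))

/-- `L^{Sk} = Tr_{q (2…k)} (S^{(k)} L_{1̄} ⋯ L_{k̄})`. -/
noncomputable def LsymRE {F : Type*} [Field F] (𝒜 : Type*) [Ring 𝒜] [Algebra F 𝒜]
    {N : ℕ} (Rh : RMat F N) (q : F) (D : Matrix (Fin N) (Fin N) F)
    (L : Matrix (Fin N) (Fin N) 𝒜) : ℕ → Matrix (Fin N) (Fin N) 𝒜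
  | 0 => 1
  | k + 1 => trAllButFirst
      (lift 𝒜 (syms Rh q (k + 1)) * LbarProd 𝒜 Rh (k + 1) L (k + 1) * lift 𝒜 (Dbig D k))

/-- `σ_k(L) = q^k Tr_q (L^{∧k})`, with `σ₀(L) = 1`;  `Tr_q X = Tr (D_r X)`. -/
noncomputable def sigmaRE {F : Type*} [Field F] (𝒜 : Type*) [Ring 𝒜] [Algebra F 𝒜]
    {N : ℕ} (Rh : RMat F N) (q : F) (D : Matrix (Fin N) (Fin N) F)
    (L : Matrix (Fin N) (Fin N) 𝒜) : ℕ → 𝒜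
  | 0 => 1
  | k + 1 => q ^ (k + 1) •
      Matrix.trace (D.map (algebraMap F 𝒜) * LwedgeRE 𝒜 Rh q D L (k + 1))

/-- `τ_k(L) = q^{-k} Tr_q (L^{Sk})`, with `τ₀(L) = 1`. -/
noncomputable def tauRE {F : Type*} [Field F] (𝒜 : Type*) [Ring 𝒜] [Algebra F 𝒜]
    {N : ℕ} (Rh : RMat F N) (q : F) (D : Matrix (Fin N) (Fin N) F)
    (L : Matrix (Fin N) (Fin N) 𝒜) : ℕ → 𝒜
  | 0 => 1
  | k + 1 => q⁻¹ ^ (k + 1) •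
      Matrix.trace (D.map (algebraMap F 𝒜) * LsymRE 𝒜 Rh q D L (k + 1))

/-!
Replacing `R̂` by `-R̂` and `q` by `q⁻¹` preserves the braid and Hecke relations and turns the
recursion for `S^{(k)}` into the one for `A^{(k)}`, so only the antisymmetrizers need an argument.
By induction on `k`, `A^{(k)}` is idempotent and `A^{(k)} R̂_i = -q⁻¹ A^{(k)}` for `i < k`.
For the step put `X = A^{(k)} (q^k - k_q R̂_k) A^{(k)}`. Feeding the recursion for `A^{(k)}` into
`k_q (A^{(k)} R̂_k)²` and using the Hecke relation for `R̂_k`, the braid relation between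
`R̂_{k-1}` and `R̂_k` and the fact that `A^{(k-1)}` commutes with `R̂_k`, one expresses
`k_q (A^{(k)} R̂_k)²` through `A^{(k)}`, `A^{(k)} R̂_k` and `A^{(k)} R̂_k A^{(k)}`. This yields
`X R̂_k = -q⁻¹ X`, hence `X² = (q^k + q⁻¹ k_q) X = (k+1)_q X`, and `A^{(k+1)} = X / (k+1)_q`.
-/

section TensorLegs

open scoped Kronecker

variable {R : Type*} [CommRing R] {N : ℕ}

def tens {l r : ℕ} (A : TensM R N l) (B : TensM R N r) : TensM R N (l + r) :=
  (A ⊗ₖ B).submatrix (Fin.appendEquiv l r).symm (Fin.appendEquiv l r).symm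

theorem tens_apply {l r : ℕ} (A : TensM R N l) (B : TensM R N r) (a b : Fin (l + r) → Fin N) :
    tens A B a b = A (fun i => a (Fin.castAdd r i)) (fun i => b (Fin.castAdd r i)) *
      B (fun i => a (Fin.natAdd l i)) (fun i => b (Fin.natAdd l i)) := rfl

theorem tens_mul {l r : ℕ} (A A' : TensM R N l) (B B' : TensM R N r) :
    tens A B * tens A' B' = tens (A * A') (B * B') := by
  rw [tens, tens, Matrix.submatrix_mul_equiv, ← Matrix.mul_kronecker_mul, tens]

theorem tens_one (l r : ℕ) : tens (1 : TensM R N l) (1 : TensM R N r) = 1 := by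
  rw [tens, Matrix.one_kronecker_one, Matrix.submatrix_one_equiv]

theorem tens_smul_left {l r : ℕ} (c : R) (A : TensM R N l) (B : TensM R N r) :
    tens (c • A) B = c • tens A B := by
  ext a b; simp only [tens_apply, Matrix.smul_apply, smul_eq_mul, mul_assoc]

theorem tens_sub_left {l r : ℕ} (A A' : TensM R N l) (B : TensM R N r) :
    tens (A - A') B = tens A B - tens A' B := by
  ext a b; simp only [tens_apply, Matrix.sub_apply, sub_mul]

theorem tens_smul_right {l r : ℕ} (c : R) (A : TensM R N l) (B : TensM R N r) :
    tens A (c • B) = c • tens A B := by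
  ext a b; simp only [tens_apply, Matrix.smul_apply, smul_eq_mul, mul_left_comm]

theorem tens_add_right {l r : ℕ} (A : TensM R N l) (B B' : TensM R N r) :
    tens A (B + B') = tens A B + tens A B' := by
  ext a b; simp only [tens_apply, Matrix.add_apply, mul_add]

theorem embed_self {k : ℕ} (M : TensM R N k) : embed k M = M := by
  ext a b
  simp only [embed, Matrix.of_apply, dif_pos le_rfl]
  rw [if_pos fun t ht => absurd t.isLt (by omega)]

theorem embed_tens {k l r : ℕ} (hk : k ≤ l) (M : TensM R N k) :
    (embed (l + r) M : TensM R N (l + r)) = tens (embed l M) 1 := by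
  ext a b
  simp only [embed, tens_apply, Matrix.of_apply, dif_pos hk,
    dif_pos (hk.trans (Nat.le_add_right l r)), Matrix.one_apply, ite_zero_mul_ite_zero, mul_one]
  refine if_congr ?_ rfl rfl
  rw [Fin.forall_fin_add, funext_iff]
  simp only [Fin.val_castAdd, Fin.val_natAdd]
  exact and_congr Iff.rfl ⟨fun h j => h j (by omega), fun h j _ => h j⟩

theorem place2_tens_left {l r p : ℕ} (hp : p + 2 ≤ l) (X : RMat R N) :
    (place2 p X : TensM R N (l + r)) = tens (place2 p X) 1 := by
  ext a b
  simp only [place2, tens_apply, Matrix.of_apply, dif_pos (show p + 1 < l by omega),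
    dif_pos (show p + 1 < l + r by omega), Matrix.one_apply, ite_zero_mul_ite_zero, mul_one]
  refine if_congr ?_ rfl rfl
  rw [Fin.forall_fin_add, funext_iff]
  simp only [Fin.val_castAdd, Fin.val_natAdd]
  exact and_congr Iff.rfl ⟨fun h j => h j (by omega) (by omega), fun h j _ _ => h j⟩

theorem place2_tens_right {l r i : ℕ} (hi : i + 2 ≤ r) (X : RMat R N) :
    (place2 (l + i) X : TensM R N (l + r)) = tens 1 (place2 i X) := by
  ext a b
  simp only [place2, tens_apply, Matrix.of_apply, dif_pos (show i + 1 < r by omega),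
    dif_pos (show l + i + 1 < l + r by omega), Matrix.one_apply, ite_zero_mul_ite_zero, one_mul]
  refine if_congr ?_ rfl rfl
  rw [Fin.forall_fin_add, funext_iff]
  simp only [Fin.val_castAdd, Fin.val_natAdd]
  exact and_congr ⟨fun h j => h j (by omega) (by omega), fun h j _ _ => h j⟩
    ⟨fun h j h1 h2 => h j (by omega) (by omega), fun h j h1 h2 => h j (by omega) (by omega)⟩

theorem embed_eq_tens {k r : ℕ} (M : TensM R N k) :
    (embed (k + r) M : TensM R N (k + r)) = tens M 1 := by
  rw [embed_tens le_rfl, embed_self]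

theorem embed_mul {k m : ℕ} (h : k ≤ m) (M M' : TensM R N k) :
    embed m (M * M') = (embed m M : TensM R N m) * embed m M' := by
  obtain ⟨r, rfl⟩ := Nat.exists_eq_add_of_le h
  rw [embed_eq_tens, embed_eq_tens, embed_eq_tens, tens_mul, one_mul]

theorem embed_smul {k m : ℕ} (h : k ≤ m) (c : R) (M : TensM R N k) :
    embed m (c • M) = c • (embed m M : TensM R N m) := by
  obtain ⟨r, rfl⟩ := Nat.exists_eq_add_of_le h
  rw [embed_eq_tens, embed_eq_tens, tens_smul_left]

theorem embed_sub {k m : ℕ} (h : k ≤ m) (M M' : TensM R N k) :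
    embed m (M - M') = (embed m M : TensM R N m) - embed m M' := by
  obtain ⟨r, rfl⟩ := Nat.exists_eq_add_of_le h
  rw [embed_eq_tens, embed_eq_tens, embed_eq_tens, tens_sub_left]

theorem embed_one {k m : ℕ} (h : k ≤ m) : embed m (1 : TensM R N k) = (1 : TensM R N m) := by
  obtain ⟨r, rfl⟩ := Nat.exists_eq_add_of_le h
  rw [embed_eq_tens, tens_one]

theorem embed_embed {k l m : ℕ} (hkl : k ≤ l) (hlm : l ≤ m) (M : TensM R N k) :
    embed m (embed l M : TensM R N l) = embed m M := by
  obtain ⟨r, rfl⟩ := Nat.exists_eq_add_of_le hlm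
  rw [embed_eq_tens, embed_tens hkl]

theorem embed_place2 {p k m : ℕ} (hp : p + 2 ≤ k) (hk : k ≤ m) (X : RMat R N) :
    embed m (place2 p X : TensM R N k) = (place2 p X : TensM R N m) := by
  obtain ⟨r, rfl⟩ := Nat.exists_eq_add_of_le hk
  rw [embed_eq_tens, place2_tens_left hp]

theorem IsIdempotentElem.embed {k m : ℕ} (hk : k ≤ m) {M : TensM R N k}
    (h : IsIdempotentElem M) : IsIdempotentElem (embed m M : TensM R N m) := by
  rw [IsIdempotentElem, ← embed_mul hk, h.eq]

theorem embed_mul_place2 {p k m : ℕ} (hp : p + 2 ≤ k) (hk : k ≤ m) {M : TensM R N k}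
    {X : RMat R N} {c : R} (h : M * place2 p X = c • M) :
    embed m M * (place2 p X : TensM R N m) = c • embed m M := by
  rw [← embed_place2 hp hk, ← embed_mul hk, h, embed_smul hk]

theorem place2_eq_tens_one (p : ℕ) (X : RMat R N) :
    (place2 p X : TensM R N (p + 2)) =
      tens 1 (X.submatrix (finTwoArrowEquiv (Fin N)) (finTwoArrowEquiv (Fin N))) := by
  have h := place2_tens_right (l := p) (r := 2) (i := 0) le_rfl X
  rw [add_zero] at h
  rw [h]
  rfl

theorem commute_embed_place2 {k p : ℕ} (hk : k ≤ p) (M : TensM R N k) (X : RMat R N) :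
    Commute (embed (p + 2) M) (place2 p X : TensM R N (p + 2)) := by
  rw [Commute, SemiconjBy, embed_tens hk, place2_eq_tens_one, tens_mul, tens_mul, one_mul, mul_one,
    mul_one, one_mul]

theorem place2_neg {p m : ℕ} (X : RMat R N) :
    (place2 p (-X) : TensM R N m) = -place2 p X := by
  ext a b
  simp only [place2, Matrix.of_apply, Matrix.neg_apply]
  split_ifs <;> simp

end TensorLegs

section HeckeBraid

variable {F : Type*} [Field F] {N : ℕ} {q : F} {Rh : RMat F N}

theorem Hecke.place2_mul_self (hH : Hecke q Rh) (p : ℕ) :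
    (place2 p Rh : TensM F N (p + 2)) * place2 p Rh = 1 + (q - q⁻¹) • place2 p Rh := by
  rw [place2_eq_tens_one, tens_mul, one_mul, Matrix.submatrix_mul_equiv, hH]
  simp only [Matrix.submatrix_add, Pi.add_apply, Matrix.submatrix_smul, Pi.smul_apply,
    Matrix.submatrix_one_equiv, tens_add_right, tens_smul_right, tens_one]

theorem YangBaxter.place2_braid (hYB : YangBaxter Rh) (p : ℕ) :
    (place2 p Rh : TensM F N (p + 3)) * place2 (p + 1) Rh * place2 p Rh =
      place2 (p + 1) Rh * place2 p Rh * place2 (p + 1) Rh := by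
  have h0 := place2_tens_right (l := p) (show 0 + 2 ≤ 3 by omega) Rh
  rw [add_zero] at h0
  rw [h0, place2_tens_right (show 1 + 2 ≤ 3 by omega), tens_mul, tens_mul, tens_mul, tens_mul,
    one_mul, one_mul, hYB]

theorem Hecke.neg_inv (hH : Hecke q Rh) : Hecke q⁻¹ (-Rh) := by
  rw [Hecke, neg_mul_neg, hH, inv_inv, smul_neg, ← neg_smul, neg_sub]

theorem YangBaxter.neg (hYB : YangBaxter Rh) : YangBaxter (-Rh) := by
  rw [YangBaxter, place2_neg, place2_neg, neg_mul_neg, neg_mul_neg, mul_neg, mul_neg, hYB]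

end HeckeBraid

section QNumber

variable {F : Type*} [Field F] {q : F}

theorem sub_inv_ne_zero_of_qnum_ne_zero {k : ℕ} (h : qnum q k ≠ 0) : q - q⁻¹ ≠ 0 := by
  rintro hq
  exact h (by rw [qnum, hq, div_zero])

theorem ne_zero_of_sub_inv_ne_zero (h : q - q⁻¹ ≠ 0) : q ≠ 0 := by
  rintro rfl
  simp at h

theorem qnum_one (h : q - q⁻¹ ≠ 0) : qnum q 1 = 1 := by
  rw [qnum, pow_one, pow_one, div_self h]

theorem qnum_succ (h : q - q⁻¹ ≠ 0) (k : ℕ) : qnum q (k + 1) = q ^ k + q⁻¹ * qnum q k := by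
  rw [qnum, qnum, div_eq_iff h, add_mul, mul_assoc, div_mul_cancel₀ _ h]
  ring

theorem qnum_inv (k : ℕ) : qnum q⁻¹ k = qnum q k := by
  rw [qnum, qnum, inv_inv, ← neg_div_neg_eq, neg_sub, neg_sub]

end QNumber

section HeckeAlgebra

variable {F G : Type*} [Field F] [Ring G] [Algebra F G]

theorem mul_self_eq_smul_of_mul_eq_smul {a r X : G} {α η t : F} (ha : IsIdempotentElem a)
    (hX : X = a * (α • 1 - η • r) * a) (hXr : X * r = t • X) : X * X = (α - η * t) • X := by
  have hXa : X * a = X := by rw [hX, mul_assoc _ a a, ha.eq]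
  have hX' : X = α • a - η • (a * r * a) := by
    rw [hX]
    simp only [mul_sub, sub_mul, mul_smul_comm, smul_mul_assoc, mul_one, ha.eq]
  calc X * X = X * (α • a - η • (a * r * a)) := by rw [← hX']
    _ = (α - η * t) • X := by
        rw [mul_sub, mul_smul_comm, mul_smul_comm, ← mul_assoc, ← mul_assoc, hXa, hXr,
          smul_mul_assoc, hXa, sub_smul, mul_smul]

theorem isIdempotentElem_inv_smul {X : G} {δ : F} (hδ : δ ≠ 0) (h : X * X = δ • X) :
    IsIdempotentElem (δ⁻¹ • X) := by
  rw [IsIdempotentElem, smul_mul_smul_comm, h, smul_smul, mul_assoc, inv_mul_cancel₀ hδ, mul_one]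

theorem hecke_sub_mul {r : G} {q : F} (hq : q ≠ 0) (hH : r * r = 1 + (q - q⁻¹) • r) :
    (q • 1 - r) * r = (-q⁻¹) • (q • 1 - r) := by
  rw [sub_mul, hH, smul_mul_assoc, one_mul, smul_sub, neg_smul, smul_smul, inv_mul_cancel₀ hq]
  module

/-- `a'`, `a` play the roles of `A^{(n)}`, `A^{(n+1)}` and `r'`, `r` those of `R̂_n`, `R̂_{n+1}`. -/
structure AntisymStep (q : F) (n : ℕ) (a' a r' r : G) : Prop where
  prev_idem : IsIdempotentElem a'
  idem : IsIdempotentElem a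
  qnum_ne_zero : qnum q (n + 1) ≠ 0
  qnum_smul : qnum q (n + 1) • a = a' * (q ^ n • 1 - qnum q n • r') * a'
  mul_prev_gen : a * r' = (-q⁻¹) • a
  commute : a' * r = r * a'
  hecke : r * r = 1 + (q - q⁻¹) • r
  braid : r' * r * r' = r * r' * r

namespace AntisymStep

variable {q : F} {n : ℕ} {a' a r' r : G}

theorem mul_prev (h : AntisymStep q n a' a r' r) : a * a' = a := by
  refine smul_right_injective G h.qnum_ne_zero ?_
  simp only
  rw [← smul_mul_assoc, h.qnum_smul, mul_assoc _ a', h.prev_idem.eq]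

theorem mul_gen_mul_prev (h : AntisymStep q n a' a r' r) : a * r * a' = a * r := by
  rw [mul_assoc, ← h.commute, ← mul_assoc, h.mul_prev]

theorem qnum_smul_mul_gen_mul_prev_gen (h : AntisymStep q n a' a r' r) :
    qnum q n • (a * r * r' * a') = q ^ n • (a * r) - qnum q (n + 1) • (a * r * a) := by
  have hprev : qnum q n • (a' * r' * a') = q ^ n • a' - qnum q (n + 1) • a := by
    rw [h.qnum_smul]
    simp only [mul_sub, sub_mul, mul_smul_comm, smul_mul_assoc, mul_one, h.prev_idem.eq]
    abel
  calc qnum q n • (a * r * r' * a') = qnum q n • (a * r * a' * r' * a') := by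
        rw [h.mul_gen_mul_prev]
    _ = a * r * (qnum q n • (a' * r' * a')) := by
        rw [mul_smul_comm]
        simp only [mul_assoc]
    _ = _ := by
        rw [hprev, mul_sub, mul_smul_comm, mul_smul_comm, h.mul_gen_mul_prev, mul_assoc _ r a]

theorem qnum_smul_mul_gen_sq (h : AntisymStep q n a' a r' r) :
    qnum q (n + 1) • (a * r * (a * r)) =
      q ^ n • a + q ^ (n + 1) • (a * r) - (q⁻¹ * qnum q (n + 1)) • (a * r * a) := by
  have hsq : a * (r * r) * a' = a + (q - q⁻¹) • (a * r) := by
    rw [h.hecke, mul_add, mul_one, add_mul, h.mul_prev, mul_smul_comm, smul_mul_assoc,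
      h.mul_gen_mul_prev]
  have hbraid : a * (r * r' * r) * a' = (-q⁻¹) • (a * r * r' * a') := by
    rw [← h.braid]
    simp only [← mul_assoc]
    rw [h.mul_prev_gen, smul_mul_assoc, smul_mul_assoc, smul_mul_assoc]
  calc qnum q (n + 1) • (a * r * (a * r))
      = a * r * (qnum q (n + 1) • a) * r := by
        rw [mul_smul_comm, smul_mul_assoc, mul_assoc (a * r) a r]
    _ = a * r * a' * (q ^ n • 1 - qnum q n • r') * (a' * r) := by
        rw [h.qnum_smul]
        simp only [mul_assoc]
    _ = q ^ n • (a * (r * r) * a') - qnum q n • (a * (r * r' * r) * a') := by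
        rw [h.mul_gen_mul_prev, h.commute]
        simp only [mul_sub, sub_mul, mul_smul_comm, smul_mul_assoc, mul_one, mul_assoc]
    _ = _ := by
        rw [hsq, hbraid, smul_comm, h.qnum_smul_mul_gen_mul_prev_gen]
        module

theorem next_mul_gen (h : AntisymStep q n a' a r' r) {X : G}
    (hX : X = a * (q ^ (n + 1) • 1 - qnum q (n + 1) • r) * a) : X * r = (-q⁻¹) • X := by
  have hq := ne_zero_of_sub_inv_ne_zero (sub_inv_ne_zero_of_qnum_ne_zero h.qnum_ne_zero)
  have hXr : X * r = q ^ (n + 1) • (a * r) - qnum q (n + 1) • (a * r * (a * r)) := by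
    rw [hX]
    simp only [mul_sub, sub_mul, mul_smul_comm, smul_mul_assoc, mul_one, h.idem.eq, mul_assoc]
  rw [hXr, h.qnum_smul_mul_gen_sq, hX]
  simp only [mul_sub, sub_mul, mul_smul_comm, smul_mul_assoc, mul_one, h.idem.eq]
  match_scalars <;> field_simp <;> ring

end AntisymStep

end HeckeAlgebra

section Antisymmetrizer

variable {F : Type*} [Field F] {N : ℕ} {q : F} {Rh : RMat F N}

def IsEigenProjector {k : ℕ} (Rh : RMat F N) (t : F) (P : TensM F N k) : Prop :=
  IsIdempotentElem P ∧ ∀ i, i + 2 ≤ k → P * place2 i Rh = t • P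

theorem qnum_smul_embed_antis {n m : ℕ} (hγ : qnum q (n + 2) ≠ 0) (hm : n + 2 ≤ m) :
    qnum q (n + 2) • embed m (antis Rh q (n + 2)) =
      embed m (antis Rh q (n + 1)) * (q ^ (n + 1) • 1 - qnum q (n + 1) • place2 n Rh) *
        embed m (antis Rh q (n + 1)) := by
  rw [antis, embed_smul hm, smul_smul, mul_inv_cancel₀ hγ, one_smul, embed_mul hm, embed_mul hm,
    embed_sub hm, embed_smul hm, embed_smul hm, embed_one hm, embed_place2 le_rfl hm,
    embed_embed (Nat.le_succ _) hm]

theorem IsEigenProjector.antis_succ_succ {n : ℕ} (hqnum : qnum q (n + 2) ≠ 0)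
    (hprev : IsEigenProjector Rh (-q⁻¹) (antis Rh q (n + 1))) {X : TensM F N (n + 2)}
    (hX : X = embed (n + 2) (antis Rh q (n + 1)) *
      (q ^ (n + 1) • 1 - qnum q (n + 1) • place2 n Rh) * embed (n + 2) (antis Rh q (n + 1)))
    (htop : X * place2 n Rh = (-q⁻¹) • X) :
    IsEigenProjector Rh (-q⁻¹) (antis Rh q (n + 2)) := by
  have hA : antis Rh q (n + 2) = (qnum q (n + 2))⁻¹ • X := by rw [hX]; rfl
  have hXX : X * X = qnum q (n + 2) • X := by
    rw [mul_self_eq_smul_of_mul_eq_smul (hprev.1.embed (Nat.le_succ _)) hX htop,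
      qnum_succ (sub_inv_ne_zero_of_qnum_ne_zero hqnum) (n + 1)]
    congr 1
    ring
  rw [hA]
  refine ⟨isIdempotentElem_inv_smul hqnum hXX, fun i hi => ?_⟩
  rcases (show i = n ∨ i + 2 ≤ n + 1 by omega) with rfl | hi
  · rw [smul_mul_assoc, htop, smul_comm]
  · rw [smul_mul_assoc, hX, mul_assoc, embed_mul_place2 hi (Nat.le_succ _) (hprev.2 i hi),
      mul_smul_comm, smul_comm]

theorem isEigenProjector_antis (hqnum : ∀ k : ℕ, 1 ≤ k → qnum q k ≠ 0) (hYB : YangBaxter Rh)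
    (hH : Hecke q Rh) : ∀ k, IsEigenProjector Rh (-q⁻¹) (antis Rh q k)
  | 0 | 1 => ⟨IsIdempotentElem.one, fun i hi => by omega⟩
  | 2 => by
    have hd := sub_inv_ne_zero_of_qnum_ne_zero (hqnum 1 le_rfl)
    refine (isEigenProjector_antis hqnum hYB hH 1).antis_succ_succ (hqnum 2 (by omega)) rfl ?_
    rw [show antis Rh q 1 = 1 from rfl, embed_one (by omega), one_mul, mul_one, zero_add,
      qnum_one hd, one_smul, pow_one]
    exact hecke_sub_mul (ne_zero_of_sub_inv_ne_zero hd) (hH.place2_mul_self 0)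
  | n + 3 => by
    have hprev := isEigenProjector_antis hqnum hYB hH (n + 1)
    have hcur := isEigenProjector_antis hqnum hYB hH (n + 2)
    have step : AntisymStep q (n + 1) (embed (n + 3) (antis Rh q (n + 1)))
        (embed (n + 3) (antis Rh q (n + 2))) (place2 n Rh) (place2 (n + 1) Rh) :=
      { prev_idem := hprev.1.embed (by omega)
        idem := hcur.1.embed (by omega)
        qnum_ne_zero := hqnum (n + 2) (by omega)
        qnum_smul := qnum_smul_embed_antis (hqnum (n + 2) (by omega)) (by omega)
        mul_prev_gen := embed_mul_place2 le_rfl (Nat.le_succ _) (hcur.2 n le_rfl)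
        commute := commute_embed_place2 le_rfl _ _
        hecke := hH.place2_mul_self (n + 1)
        braid := hYB.place2_braid n }
    exact hcur.antis_succ_succ (hqnum (n + 3) (by omega)) rfl (step.next_mul_gen rfl)

end Antisymmetrizer

theorem syms_eq_antis_neg {F : Type*} [Field F] {N : ℕ} (Rh : RMat F N) (q : F) :
    ∀ k, syms Rh q k = antis (-Rh) q⁻¹ k
  | 0 | 1 => rfl
  | k + 2 => by
    rw [syms, antis, syms_eq_antis_neg Rh q (k + 1), qnum_inv, qnum_inv, place2_neg, smul_neg,
      sub_neg_eq_add]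

theorem projectors_idempotent_general {F : Type*} [Field F] {N : ℕ} (q : F)
    (hqnum : ∀ k : ℕ, 1 ≤ k → qnum q k ≠ 0)
    (Rh : RMat F N)
    (hYB : YangBaxter Rh) (hHecke : Hecke q Rh)
    (k : ℕ) :
    antis Rh q k * antis Rh q k = antis Rh q k ∧
      syms Rh q k * syms Rh q k = syms Rh q k := by
  have hqnum_inv : ∀ k : ℕ, 1 ≤ k → qnum q⁻¹ k ≠ 0 := by simpa only [qnum_inv] using hqnum
  rw [syms_eq_antis_neg]
  exact ⟨(isEigenProjector_antis hqnum hYB hHecke k).1.eq,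
    (isEigenProjector_antis hqnum_inv hYB.neg hHecke.neg_inv k).1.eq⟩

theorem projectors_idempotent {F : Type*} [Field F] {N : ℕ} (hN : 1 ≤ N) (q : F) (hq : q ≠ 0)
    (hqnum : ∀ k : ℕ, 1 ≤ k → qnum q k ≠ 0)
    (Rh : RMat F N) (hRinv : IsUnit Rh.det)
    (hYB : YangBaxter Rh) (hHecke : Hecke q Rh)
    (k : ℕ) (hk1 : 1 ≤ k) :
    antis Rh q k * antis Rh q k = antis Rh q k ∧
      syms Rh q k * syms Rh q k = syms Rh q k :=
  projectors_idempotent_general q hqnum Rh hYB hHecke k
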